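/- Move commutes with Conv at the moved location: for i ≠ j, applying Move[i, j] then Conv[i, t] yields the same document as applying Conv[j, t] then Move[i, j]. -/

import Mathlib

/-- Atomic types of document components. -/
inductive Ty where
  | num | str | bool | del
deriving DecidableEq, Repr

/-- A document is a tuple (list) of atomic types. -/
abbrev Doc := List Ty

/-- Edit operations (1-based indices). `ins i t p` inserts type `t` at index `i`
    (with unique identifier `p`), shifting indices ≥ i right; `conv i t` sets the
    type at index `i` to `t`; `move i j` sets index `i` to the type at index `j`
    and sets index `j` to the tombstone `del`. -/
inductive Edit where
  | id
  | ins (i : ℕ) (t : Ty) (p : ℕ)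
  | conv (i : ℕ) (t : Ty)
  | move (i j : ℕ)
deriving DecidableEq, Repr

/-- Partial action of an edit on a document (1-based indices). -/
def Edit.apply : Edit → Doc → Option Doc
  | .id, d => some d
  | .ins i t _, d =>
      if 1 ≤ i ∧ i ≤ d.length + 1 then
        some (d.take (i-1) ++ t :: d.drop (i-1))
      else none
  | .conv i t, d =>
      if 1 ≤ i ∧ i ≤ d.length then some (d.set (i-1) t) else none
  | .move i j, d =>
      if 1 ≤ i ∧ i ≤ d.length ∧ 1 ≤ j ∧ j ≤ d.length ∧ i ≠ j then
        some ((d.set (i-1) (d.getD (j-1) .del)).set (j-1) .del)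
      else none

theorem List.getD_set_self {α : Type*} (l : List α) {n : ℕ} (hn : n < l.length) (a z : α) :
    (l.set n a).getD n z = a := by
  rw [List.getD_eq_getElem _ _ (by simpa using hn), List.getElem_set_self]

theorem List.set_move_set_eq_move_set {α : Type*} (l : List α) {m n : ℕ} (hmn : m ≠ n)
    (hn : n < l.length) (z b : α) :
    ((l.set m (l.getD n z)).set n z).set m b =
      ((l.set n b).set m ((l.set n b).getD n z)).set n z := by
  rw [List.getD_set_self l hn, List.set_comm _ _ hmn, List.set_set, List.set_comm _ _ hmn,
    List.set_set]

namespace Edit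

theorem apply_conv_eq_some {k : ℕ} {t : Ty} {d e : Doc} :
    (conv k t).apply d = some e ↔ (1 ≤ k ∧ k ≤ d.length) ∧ d.set (k - 1) t = e := by
  simp only [apply, Option.ite_none_right_eq_some, Option.some_inj]

theorem apply_move_eq_some {i j : ℕ} {d e : Doc} :
    (move i j).apply d = some e ↔
      (1 ≤ i ∧ i ≤ d.length ∧ 1 ≤ j ∧ j ≤ d.length ∧ i ≠ j) ∧
        (d.set (i - 1) (d.getD (j - 1) .del)).set (j - 1) .del = e := by
  simp only [apply, Option.ite_none_right_eq_some, Option.some_inj]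

end Edit

theorem move_conv_source_general (i j : ℕ) (t : Ty)
    (d r₁ r₂ : Doc)
    (h₁ : ((Edit.move i j).apply d >>= (Edit.conv i t).apply) = some r₁)
    (h₂ : ((Edit.conv j t).apply d >>= (Edit.move i j).apply) = some r₂) :
    r₁ = r₂ := by
  obtain ⟨m, hm, hr₁⟩ := Option.bind_eq_some_iff.mp h₁
  obtain ⟨⟨hi₁, hi, hj₁, hj, hij⟩, rfl⟩ := Edit.apply_move_eq_some.mp hm
  obtain ⟨-, rfl⟩ := Edit.apply_conv_eq_some.mp hr₁
  obtain ⟨c, hc, hr₂⟩ := Option.bind_eq_some_iff.mp h₂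
  obtain ⟨-, rfl⟩ := Edit.apply_conv_eq_some.mp hc
  obtain ⟨-, rfl⟩ := Edit.apply_move_eq_some.mp hr₂
  exact List.set_move_set_eq_move_set d (by omega) (by omega) .del t

/-- for `i ≠ j`, applying `Move[i,j]` then `Conv[i,t]` yields the same
document as applying `Conv[j,t]` then `Move[i,j]`. -/
theorem move_conv_source (i j : ℕ) (t : Ty) (hij : i ≠ j)
    (d r₁ r₂ : Doc)
    (h₁ : ((Edit.move i j).apply d >>= (Edit.conv i t).apply) = some r₁)
    (h₂ : ((Edit.conv j t).apply d >>= (Edit.move i j).apply) = some r₂) :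
    r₁ = r₂ :=
  move_conv_source_general i j t d r₁ r₂ h₁ h₂
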